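/- Let 0 < λ_l < λ_u be reals, n ≥ 1 an integer, and d = (λ_l + λ_u)/(λ_u − λ_l). Then for any real numbers c_1, …, c_n, the supremum over λ ∈ [λ_l, λ_u] of ∏_{m=1}^{n} (1 − c_m λ)² is at least 1/T_n(d)². -/
import Mathlib

open Real Polynomial Finset

lemma cheb_natDegree_le (n : ℕ) : (Polynomial.Chebyshev.T ℝ (n : ℤ)).natDegree ≤ n := by
  induction n using Nat.strong_induction_on with
  | _ n ih =>
    match n with
    | 0 => simp [Polynomial.Chebyshev.T_zero]
    | 1 => simp [Polynomial.Chebyshev.T_one]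
    | (m+2) =>
      have h := Polynomial.Chebyshev.T_add_two ℝ (m : ℤ)
      have : ((m:ℤ) + 2) = ((m+2 : ℕ) : ℤ) := by push_cast; ring
      rw [this] at h
      rw [h]
      refine le_trans (Polynomial.natDegree_sub_le _ _) ?_
      have h1 : (2 * X * Polynomial.Chebyshev.T ℝ ((m:ℤ)+1)).natDegree ≤ m + 2 := by
        refine le_trans (Polynomial.natDegree_mul_le) ?_
        have : ((m:ℤ) + 1) = ((m+1 : ℕ) : ℤ) := by push_cast; ring
        rw [this]
        have := ih (m+1) (by omega)
        have h2X : (2 * X : ℝ[X]).natDegree ≤ 1 :=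
          le_trans Polynomial.natDegree_mul_le (by simp)
        omega
      have h2 : (Polynomial.Chebyshev.T ℝ (m : ℤ)).natDegree ≤ m + 2 :=
        le_trans (ih m (by omega)) (by omega)
      omega

lemma cheb_one_le {x : ℝ} (hx : 1 ≤ x) (n : ℕ) :
    1 ≤ (Polynomial.Chebyshev.T ℝ (n : ℤ)).eval x := by
  suffices h : ∀ m : ℕ, 1 ≤ (Polynomial.Chebyshev.T ℝ (m : ℤ)).eval x ∧
      (Polynomial.Chebyshev.T ℝ (m : ℤ)).eval x ≤
        (Polynomial.Chebyshev.T ℝ ((m:ℤ) + 1)).eval x from (h n).1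
  intro m
  induction m with
  | zero => simp [Polynomial.Chebyshev.T_zero, Polynomial.Chebyshev.T_one]; linarith
  | succ k ihk =>
    obtain ⟨h1, h2⟩ := ihk
    have hrec := Polynomial.Chebyshev.T_add_two ℝ (k : ℤ)
    have heval : (Polynomial.Chebyshev.T ℝ ((k:ℤ) + 2)).eval x =
        2 * x * (Polynomial.Chebyshev.T ℝ ((k:ℤ)+1)).eval x
          - (Polynomial.Chebyshev.T ℝ (k:ℤ)).eval x := by
      rw [hrec]; simp
    have hcast : ((k+1 : ℕ) : ℤ) = (k:ℤ) + 1 := by push_cast; ring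
    have hcast2 : ((k:ℤ) + 1) + 1 = (k:ℤ) + 2 := by ring
    constructor
    · rw [hcast]; linarith
    · rw [hcast, hcast2, heval]
      nlinarith

set_option maxHeartbeats 400000 in
theorem contraction_sup_lower_bound
    (lamL lamU : ℝ) (h0 : 0 < lamL) (h1 : lamL < lamU) (n : ℕ) (hn : 1 ≤ n)
    (c : ℕ → ℝ) :
    1 / ((Polynomial.Chebyshev.T ℝ (n : ℤ)).eval ((lamL + lamU) / (lamU - lamL))) ^ 2 ≤
      sSup ((fun lam : ℝ => ∏ m ∈ Finset.Icc 1 n, (1 - c m * lam) ^ 2) ''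
        Set.Icc lamL lamU) := by
  set d : ℝ := (lamL + lamU) / (lamU - lamL) with hd_def
  set b : ℝ := (lamU - lamL) / 2 with hb_def
  set a : ℝ := (lamU + lamL) / 2 with ha_def
  have hb : 0 < b := by rw [hb_def]; linarith
  have hUL : 0 < lamU - lamL := by linarith
  have hd1 : 1 ≤ d := by
    rw [hd_def, le_div_iff₀ hUL]; linarith
  have hdb : d * b = a := by
    rw [hd_def, hb_def, ha_def]; field_simp; ring
  set T : ℝ := (Polynomial.Chebyshev.T ℝ (n : ℤ)).eval d with hT_def
  have hT1 : 1 ≤ T := cheb_one_le hd1 n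
  have hT0 : 0 < T := by linarith
  have hnR : (0:ℝ) < n := by exact_mod_cast hn
  -- nodes
  set v : ℕ → ℝ := fun k => a - b * Real.cos (k * π / n) with hv_def
  set s : Finset ℕ := Finset.range (n+1) with hs_def
  have hθmem : ∀ k ≤ n, (k * π / n : ℝ) ∈ Set.Icc (0:ℝ) π := by
    intro k hk
    constructor
    · positivity
    · rw [div_le_iff₀ hnR]
      have : (k:ℝ) ≤ n := by exact_mod_cast hk
      nlinarith [Real.pi_pos]
  have hmono : ∀ j k, j < k → k ≤ n → v j < v k := by
    intro j k hjk hk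
    have hj : (j * π / n : ℝ) < k * π / n := by
      have hjR : (j:ℝ) < k := by exact_mod_cast hjk
      have hπ := Real.pi_pos
      apply div_lt_div_of_pos_right _ hnR
      nlinarith
    have hcos := Real.strictAntiOn_cos (hθmem j (by omega)) (hθmem k hk) hj
    rw [hv_def]
    simp only
    nlinarith
  have hinj : Set.InjOn v (s : Set ℕ) := by
    intro j hj k hk hjk
    simp only [hs_def, Finset.coe_range, Set.mem_Iio] at hj hk
    by_contra hne
    rcases lt_or_gt_of_ne hne with h | h
    · exact absurd hjk (ne_of_lt (hmono j k h (by omega)))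
    · exact absurd hjk.symm (ne_of_lt (hmono k j h (by omega)))
  have hvpos : ∀ k, 0 < v k := by
    intro k
    have hc := Real.neg_one_le_cos (k * π / n)
    have hc2 := Real.cos_le_one (k * π / n : ℝ)
    rw [hv_def]; simp only
    have : a - b = lamL := by rw [ha_def, hb_def]; ring
    nlinarith
  have hmem : ∀ k, v k ∈ Set.Icc lamL lamU := by
    intro k
    have hc := Real.neg_one_le_cos (k * π / n)
    have hc2 := Real.cos_le_one (k * π / n : ℝ)
    constructor
    · rw [hv_def]; simp only; rw [ha_def, hb_def] at *; nlinarith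
    · rw [hv_def]; simp only; rw [ha_def, hb_def] at *; nlinarith
  -- the polynomial P
  set P : Polynomial ℝ := ∏ m ∈ Finset.Icc 1 n, (1 - Polynomial.C (c m) * Polynomial.X)
    with hP_def
  have hPeval : ∀ x : ℝ, P.eval x = ∏ m ∈ Finset.Icc 1 n, (1 - c m * x) := by
    intro x
    rw [hP_def, Polynomial.eval_prod]
    exact Finset.prod_congr rfl (fun m _ => by simp)
  have hP0 : P.eval 0 = 1 := by rw [hPeval]; simp
  have hcard : #s = n + 1 := by rw [hs_def, Finset.card_range]
  have hPdeg : P.degree < (#s : WithBot ℕ) := by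
    have hnd : P.natDegree ≤ n := by
      refine le_trans (Polynomial.natDegree_prod_le _ _) ?_
      refine le_trans (Finset.sum_le_card_nsmul _ _ 1 ?_) (by simp [Nat.card_Icc])
      intro m _
      refine le_trans (Polynomial.natDegree_sub_le _ _) (max_le (by simp) ?_)
      exact le_trans Polynomial.natDegree_mul_le (by simp)
    calc P.degree ≤ (P.natDegree : WithBot ℕ) := Polynomial.degree_le_natDegree
      _ ≤ (n : WithBot ℕ) := by exact_mod_cast hnd
      _ < (#s : WithBot ℕ) := by rw [hcard]; exact_mod_cast Nat.lt_succ_self n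
  -- the polynomial Q
  set Q : Polynomial ℝ := (Polynomial.Chebyshev.T ℝ (n : ℤ)).comp
      (Polynomial.C d - Polynomial.C b⁻¹ * Polynomial.X) with hQ_def
  have hQeval : ∀ x : ℝ, Q.eval x =
      (Polynomial.Chebyshev.T ℝ (n : ℤ)).eval (d - b⁻¹ * x) := by
    intro x; rw [hQ_def, Polynomial.eval_comp]; simp
  have hQ0 : Q.eval 0 = T := by rw [hQeval]; simp [hT_def]
  have hQnode : ∀ k ∈ s, Q.eval (v k) = (-1 : ℝ)^k := by
    intro k hk
    have hkn : k ≤ n := by rw [hs_def] at hk; simp at hk; omega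
    rw [hQeval]
    have harg : d - b⁻¹ * v k = Real.cos (k * π / n) := by
      rw [hv_def]; simp only
      field_simp
      nlinarith [hdb]
    rw [harg, Polynomial.Chebyshev.T_real_cos]
    have : ((n : ℤ) : ℝ) * (k * π / n) = k * π := by
      push_cast
      field_simp
    rw [this]
    have := Real.cos_nat_mul_pi_sub 0 k
    simpa using this
  have hQdeg : Q.degree < (#s : WithBot ℕ) := by
    have hnd : Q.natDegree ≤ n := by
      refine le_trans Polynomial.natDegree_comp_le ?_
      have h2 : (Polynomial.C d - Polynomial.C b⁻¹ * Polynomial.X : Polynomial ℝ).natDegree ≤ 1 := by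
        refine le_trans (Polynomial.natDegree_sub_le _ _) (max_le (by simp) ?_)
        exact le_trans Polynomial.natDegree_mul_le (by simp)
      have := cheb_natDegree_le n
      calc (Polynomial.Chebyshev.T ℝ (n : ℤ)).natDegree *
            (Polynomial.C d - Polynomial.C b⁻¹ * Polynomial.X : Polynomial ℝ).natDegree
          ≤ n * 1 := Nat.mul_le_mul this h2
        _ = n := by omega
    calc Q.degree ≤ (Q.natDegree : WithBot ℕ) := Polynomial.degree_le_natDegree
      _ ≤ (n : WithBot ℕ) := by exact_mod_cast hnd
      _ < (#s : WithBot ℕ) := by rw [hcard]; exact_mod_cast Nat.lt_succ_self n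
  -- Lagrange coefficients at 0
  set ell : ℕ → ℝ := fun k => (Lagrange.basis s v k).eval 0 with hell_def
  have hPid : P.eval 0 = ∑ k ∈ s, P.eval (v k) * ell k := by
    conv_lhs => rw [Lagrange.eq_interpolate hinj hPdeg]
    rw [Lagrange.interpolate_apply, Polynomial.eval_finset_sum]
    exact Finset.sum_congr rfl (fun k _ => by simp [hell_def])
  have hQid : T = ∑ k ∈ s, (-1:ℝ)^k * ell k := by
    conv_lhs => rw [← hQ0]
    conv_lhs => rw [Lagrange.eq_interpolate hinj hQdeg]
    rw [Lagrange.interpolate_apply, Polynomial.eval_finset_sum]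
    refine Finset.sum_congr rfl (fun k hk => ?_)
    rw [Polynomial.eval_mul, Polynomial.eval_C, hQnode k hk]
  have hsign : ∀ k ∈ s, |ell k| = (-1:ℝ)^k * ell k := by
    intro k hk
    have hkn : k ≤ n := by rw [hs_def] at hk; simp at hk; omega
    have hpos : 0 ≤ (-1:ℝ)^k * ell k := by
      have hℓ : ell k = ∏ j ∈ s.erase k, ((v k - v j)⁻¹ * (0 - v j)) := by
        rw [hell_def]
        simp only
        rw [Lagrange.basis, Polynomial.eval_prod]
        exact Finset.prod_congr rfl (fun j _ => by simp [Lagrange.basisDivisor])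
      have hsplit : s.erase k = Finset.range k ∪ Finset.Ico (k+1) (n+1) := by
        ext j
        simp only [hs_def, Finset.mem_erase, Finset.mem_range, Finset.mem_union,
          Finset.mem_Ico]
        omega
      have hdisj : Disjoint (Finset.range k) (Finset.Ico (k+1) (n+1)) := by
        rw [Finset.disjoint_left]
        intro j hj hj2
        simp only [Finset.mem_range] at hj
        simp only [Finset.mem_Ico] at hj2
        omega
      rw [hℓ, hsplit, Finset.prod_union hdisj]
      have hBpos : 0 < ∏ j ∈ Finset.Ico (k+1) (n+1), ((v k - v j)⁻¹ * (0 - v j)) := by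
        apply Finset.prod_pos
        intro j hj
        simp only [Finset.mem_Ico] at hj
        have h1 : v k < v j := hmono k j (by omega) (by omega)
        have h2 : 0 < v j := hvpos j
        have h3 : (v k - v j)⁻¹ < 0 := inv_lt_zero.mpr (by linarith)
        exact mul_pos_of_neg_of_neg h3 (by linarith)
      have hA : ∀ j ∈ Finset.range k, (v k - v j)⁻¹ * (0 - v j)
          = (-1) * ((v k - v j)⁻¹ * v j) := fun j _ => by ring
      rw [Finset.prod_congr rfl hA, Finset.prod_mul_distrib, Finset.prod_const,
        Finset.card_range]
      have hCpos : 0 < ∏ j ∈ Finset.range k, ((v k - v j)⁻¹ * v j) := by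
        apply Finset.prod_pos
        intro j hj
        simp only [Finset.mem_range] at hj
        have h1 : v j < v k := hmono j k hj hkn
        have h2 : 0 < v j := hvpos j
        have h3 : 0 < (v k - v j)⁻¹ := inv_pos.mpr (by linarith)
        positivity
      have hsq : (-1:ℝ)^k * (-1:ℝ)^k = 1 := by
        rw [← mul_pow]; norm_num
      calc (0:ℝ) ≤ ((-1:ℝ)^k * (-1:ℝ)^k) *
            ((∏ j ∈ Finset.range k, ((v k - v j)⁻¹ * v j)) *
              ∏ j ∈ Finset.Ico (k+1) (n+1), ((v k - v j)⁻¹ * (0 - v j))) := by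
            rw [hsq, one_mul]; positivity
        _ = (-1:ℝ)^k * ((-1:ℝ)^k * (∏ j ∈ Finset.range k, ((v k - v j)⁻¹ * v j)) *
              ∏ j ∈ Finset.Ico (k+1) (n+1), ((v k - v j)⁻¹ * (0 - v j))) := by ring
    have habs : |(-1:ℝ)^k * ell k| = |ell k| := by
      rw [abs_mul, abs_pow, abs_neg, abs_one, one_pow, one_mul]
    rw [← habs, abs_of_nonneg hpos]
  have hsum : ∑ k ∈ s, |ell k| = T := by
    rw [hQid]
    exact Finset.sum_congr rfl hsign
  -- conclusion
  set f : ℝ → ℝ := fun lam : ℝ => ∏ m ∈ Finset.Icc 1 n, (1 - c m * lam) ^ 2 with hf_def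
  have hcont : Continuous f := by
    rw [hf_def]
    exact continuous_finset_prod _ (fun m _ => ((continuous_const.sub (continuous_const.mul continuous_id)).pow 2))
  have hbdd : BddAbove (f '' Set.Icc lamL lamU) := (isCompact_Icc.image hcont).bddAbove
  set S : ℝ := sSup (f '' Set.Icc lamL lamU) with hS_def
  have hSk : ∀ k ∈ s, (P.eval (v k))^2 ≤ S := by
    intro k hk
    have hfv : f (v k) = (P.eval (v k))^2 := by
      rw [hf_def]
      simp only
      rw [hPeval, ← Finset.prod_pow]
    rw [← hfv]
    exact le_csSup hbdd ⟨v k, hmem k, rfl⟩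
  have hS0 : 0 ≤ S := le_trans (sq_nonneg _) (hSk 0 (by simp [hs_def]))
  have habsk : ∀ k ∈ s, |P.eval (v k)| ≤ Real.sqrt S := by
    intro k hk
    rw [← Real.sqrt_sq_eq_abs]
    exact Real.sqrt_le_sqrt (hSk k hk)
  have hmain : 1 ≤ Real.sqrt S * T := by
    calc (1:ℝ) = |P.eval 0| := by rw [hP0]; simp
      _ = |∑ k ∈ s, P.eval (v k) * ell k| := by rw [hPid]
      _ ≤ ∑ k ∈ s, |P.eval (v k) * ell k| := Finset.abs_sum_le_sum_abs _ _
      _ ≤ ∑ k ∈ s, Real.sqrt S * |ell k| := by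
          refine Finset.sum_le_sum (fun k hk => ?_)
          rw [abs_mul]
          exact mul_le_mul_of_nonneg_right (habsk k hk) (abs_nonneg _)
      _ = Real.sqrt S * ∑ k ∈ s, |ell k| := by rw [Finset.mul_sum]
      _ = Real.sqrt S * T := by rw [hsum]
  have hfin : 1 / T ≤ Real.sqrt S := by
    rw [div_le_iff₀ hT0]
    linarith
  calc 1 / T^2 = (1/T)^2 := by rw [div_pow, one_pow]
    _ ≤ (Real.sqrt S)^2 := pow_le_pow_left₀ (by positivity) hfin 2
    _ = S := Real.sq_sqrt hS0
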